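/- Roots of the first bicharacteristic speed (Lemma B.2): define d₁(θ) = u − c·G_c(θ). If |u| < c·√(g¹¹), then d₁ has exactly two zeros in [0, 2π), one lying in the open interval (0, π) and one in (π, 2π); if |u| ≥ c·√(g¹¹), then d₁ has at most one zero in [0, 2π). -/

import Mathlib

open Real Matrix

noncomputable def swK (g11 g12 g22 θ : ℝ) : ℝ :=
  Real.sqrt (g11 * Real.cos θ ^ 2 + 2 * g12 * Real.sin θ * Real.cos θ + g22 * Real.sin θ ^ 2)

noncomputable def swC (g h : ℝ) : ℝ := Real.sqrt (g * h)

noncomputable def swGc (g11 g12 g22 θ : ℝ) : ℝ :=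
  (g11 * Real.cos θ + g12 * Real.sin θ) / swK g11 g12 g22 θ

noncomputable def swGs (g11 g12 g22 θ : ℝ) : ℝ :=
  (g12 * Real.cos θ + g22 * Real.sin θ) / swK g11 g12 g22 θ

/-! On the unit circle `swGc θ = (g¹¹ cos θ + g¹² sin θ) / K_θ` has derivative
`-(g¹¹g²² - (g¹²)²) sin θ / K_θ³`, so it decreases strictly from `√g¹¹` to `-√g¹¹` on `[0, π]`
and increases back to `√g¹¹` on `[π, 2π]`. The zeros of `d₁` are the solutions of
`swGc θ = u / c`: for `|u / c| < √g¹¹` the intermediate value theorem and strict monotonicity give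
exactly one on each half-circle, while a value `≥ √g¹¹` (resp. `≤ -√g¹¹`) is attained in `[0, 2π)`
only at `θ = 0` (resp. `θ = π`). -/

open Set

section
variable {g11 g12 g22 : ℝ}

lemma quadForm_pos (h11 : 0 < g11) (hdet : 0 < g11 * g22 - g12 ^ 2) (θ : ℝ) :
    0 < g11 * cos θ ^ 2 + 2 * g12 * sin θ * cos θ + g22 * sin θ ^ 2 := by
  rcases eq_or_ne (sin θ) 0 with hs | hs
  · have hc := sin_sq_add_cos_sq θ
    rw [hs] at hc ⊢
    nlinarith
  · nlinarith [sq_nonneg (g11 * cos θ + g12 * sin θ), mul_pos hdet (sq_pos_of_ne_zero hs)]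

lemma swK_pos (h11 : 0 < g11) (hdet : 0 < g11 * g22 - g12 ^ 2) (θ : ℝ) :
    0 < swK g11 g12 g22 θ :=
  sqrt_pos.2 (quadForm_pos h11 hdet θ)

lemma swK_sq (h11 : 0 < g11) (hdet : 0 < g11 * g22 - g12 ^ 2) (θ : ℝ) :
    swK g11 g12 g22 θ ^ 2 = g11 * cos θ ^ 2 + 2 * g12 * sin θ * cos θ + g22 * sin θ ^ 2 :=
  sq_sqrt (quadForm_pos h11 hdet θ).le

lemma swGc_zero : swGc g11 g12 g22 0 = √g11 := by
  simp [swGc, swK, div_sqrt]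

lemma swGc_pi : swGc g11 g12 g22 π = -√g11 := by
  simp [swGc, swK, neg_div, div_sqrt]

lemma swGc_two_pi : swGc g11 g12 g22 (2 * π) = √g11 := by
  simp [swGc, swK, div_sqrt]

lemma hasDerivAt_swGc (h11 : 0 < g11) (hdet : 0 < g11 * g22 - g12 ^ 2) (θ : ℝ) :
    HasDerivAt (swGc g11 g12 g22)
      (-(g11 * g22 - g12 ^ 2) * sin θ / swK g11 g12 g22 θ ^ 3) θ := by
  have hQ : HasDerivAt (fun θ => g11 * cos θ ^ 2 + 2 * g12 * sin θ * cos θ + g22 * sin θ ^ 2)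
      (2 * ((g22 - g11) * sin θ * cos θ + g12 * (cos θ ^ 2 - sin θ ^ 2))) θ := by
    refine (((((hasDerivAt_cos θ).fun_pow 2).const_mul g11).fun_add
      (((hasDerivAt_sin θ).const_mul (2 * g12)).fun_mul (hasDerivAt_cos θ))).fun_add
        (((hasDerivAt_sin θ).fun_pow 2).const_mul g22)).congr_deriv ?_
    norm_num
    ring
  have hA : HasDerivAt (fun θ => g11 * cos θ + g12 * sin θ) (g12 * cos θ - g11 * sin θ) θ :=
    (((hasDerivAt_cos θ).const_mul g11).fun_add ((hasDerivAt_sin θ).const_mul g12)).congr_deriv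
      (by ring)
  have hKsq := swK_sq h11 hdet θ
  refine ((hA.fun_div (hQ.sqrt (quadForm_pos h11 hdet θ).ne')
    (swK_pos h11 hdet θ).ne')).congr_deriv ?_
  rw [show √(g11 * cos θ ^ 2 + 2 * g12 * sin θ * cos θ + g22 * sin θ ^ 2) = swK g11 g12 g22 θ
    from rfl]
  have hK0 := (swK_pos h11 hdet θ).ne'
  field_simp
  rw [hKsq]
  linear_combination (g12 ^ 2 - g11 * g22) * sin θ * sin_sq_add_cos_sq θ

lemma continuous_swGc (h11 : 0 < g11) (hdet : 0 < g11 * g22 - g12 ^ 2) :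
    Continuous (swGc g11 g12 g22) :=
  continuous_iff_continuousAt.2 fun θ => (hasDerivAt_swGc h11 hdet θ).continuousAt

lemma strictAntiOn_swGc (h11 : 0 < g11) (hdet : 0 < g11 * g22 - g12 ^ 2) :
    StrictAntiOn (swGc g11 g12 g22) (Icc 0 π) := by
  refine strictAntiOn_of_deriv_neg (convex_Icc 0 π) (continuous_swGc h11 hdet).continuousOn
    fun θ hθ => ?_
  rw [interior_Icc] at hθ
  rw [(hasDerivAt_swGc h11 hdet θ).deriv]
  have hsin := sin_pos_of_pos_of_lt_pi hθ.1 hθ.2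
  have hK := swK_pos h11 hdet θ
  exact div_neg_of_neg_of_pos (by nlinarith) (by positivity)

lemma strictMonoOn_swGc (h11 : 0 < g11) (hdet : 0 < g11 * g22 - g12 ^ 2) :
    StrictMonoOn (swGc g11 g12 g22) (Icc π (2 * π)) := by
  refine strictMonoOn_of_deriv_pos (convex_Icc π (2 * π)) (continuous_swGc h11 hdet).continuousOn
    fun θ hθ => ?_
  rw [interior_Icc] at hθ
  rw [(hasDerivAt_swGc h11 hdet θ).deriv]
  have hsin : 0 < sin (θ - π) :=
    sin_pos_of_pos_of_lt_pi (by linarith [hθ.1]) (by linarith [hθ.2])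
  rw [sin_sub_pi] at hsin
  have hK := swK_pos h11 hdet θ
  exact div_pos (by nlinarith) (by positivity)

lemma eq_zero_of_sqrt_le_swGc (h11 : 0 < g11) (hdet : 0 < g11 * g22 - g12 ^ 2) {θ : ℝ}
    (hθ : θ ∈ Ico 0 (2 * π)) (h : √g11 ≤ swGc g11 g12 g22 θ) : θ = 0 := by
  rcases le_or_gt θ π with hπ | hπ
  · by_contra hne
    have := strictAntiOn_swGc h11 hdet ⟨le_rfl, pi_pos.le⟩ ⟨hθ.1, hπ⟩
      (lt_of_le_of_ne hθ.1 (Ne.symm hne))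
    rw [swGc_zero] at this
    linarith
  · have := strictMonoOn_swGc h11 hdet ⟨hπ.le, hθ.2.le⟩ ⟨by linarith [pi_pos], le_rfl⟩ hθ.2
    rw [swGc_two_pi] at this
    linarith

lemma eq_pi_of_swGc_le_neg_sqrt (h11 : 0 < g11) (hdet : 0 < g11 * g22 - g12 ^ 2) {θ : ℝ}
    (hθ : θ ∈ Ico 0 (2 * π)) (h : swGc g11 g12 g22 θ ≤ -√g11) : θ = π := by
  rcases lt_trichotomy θ π with hπ | rfl | hπ
  · have := strictAntiOn_swGc h11 hdet ⟨hθ.1, hπ.le⟩ ⟨pi_pos.le, le_rfl⟩ hπ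
    rw [swGc_pi] at this
    linarith
  · rfl
  · have := strictMonoOn_swGc h11 hdet ⟨le_rfl, by linarith [pi_pos]⟩ ⟨hπ.le, hθ.2.le⟩ hπ
    rw [swGc_pi] at this
    linarith

end

theorem roots_first_bicharacteristic_speed_general
    (g h u g11 g12 g22 : ℝ) (hg : 0 < g) (hh : 0 < h)
    (h11 : 0 < g11) (hdet : 0 < g11 * g22 - g12 ^ 2) :
    let c := swC g h
    let d1 : ℝ → ℝ := fun θ => u - c * swGc g11 g12 g22 θ
    (|u| < c * Real.sqrt g11 →
      ∃ θ1 ∈ Set.Ioo (0 : ℝ) π, ∃ θ2 ∈ Set.Ioo π (2 * π),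
        d1 θ1 = 0 ∧ d1 θ2 = 0 ∧
        ∀ θ ∈ Set.Ico (0 : ℝ) (2 * π), d1 θ = 0 → θ = θ1 ∨ θ = θ2) ∧
    (c * Real.sqrt g11 ≤ |u| →
      {θ ∈ Set.Ico (0 : ℝ) (2 * π) | d1 θ = 0}.Subsingleton) := by
  intro c d1
  have hc : 0 < c := sqrt_pos.2 (mul_pos hg hh)
  have hd1 : ∀ θ, d1 θ = 0 ↔ swGc g11 g12 g22 θ = u / c := fun θ => by
    rw [sub_eq_zero, eq_div_iff hc.ne', mul_comm, eq_comm]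
  refine ⟨fun hlt => ?_, fun hge => ?_⟩
  · obtain ⟨hlo, hhi⟩ : -√g11 < u / c ∧ u / c < √g11 := by
      rw [lt_div_iff₀ hc, div_lt_iff₀ hc]
      constructor <;> linarith [abs_lt.1 hlt]
    obtain ⟨θ1, hθ1, h1⟩ := intermediate_value_Ioo' pi_pos.le
      (continuous_swGc h11 hdet).continuousOn ⟨by rwa [swGc_pi], by rwa [swGc_zero]⟩
    obtain ⟨θ2, hθ2, h2⟩ := intermediate_value_Ioo (show π ≤ 2 * π by linarith [pi_pos])
      (continuous_swGc h11 hdet).continuousOn ⟨by rwa [swGc_pi], by rwa [swGc_two_pi]⟩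
    refine ⟨θ1, hθ1, θ2, hθ2, (hd1 θ1).2 h1, (hd1 θ2).2 h2, fun θ hθ h0 => ?_⟩
    rw [hd1] at h0
    rcases le_or_gt θ π with hπ | hπ
    · exact Or.inl <| (strictAntiOn_swGc h11 hdet).injOn ⟨hθ.1, hπ⟩ (Ioo_subset_Icc_self hθ1)
        (h0.trans h1.symm)
    · exact Or.inr <| (strictMonoOn_swGc h11 hdet).injOn ⟨hπ.le, hθ.2.le⟩
        (Ioo_subset_Icc_self hθ2) (h0.trans h2.symm)
  · rcases le_abs'.1 hge with hneg | hpos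
    · refine subsingleton_of_forall_eq π fun θ ⟨hθ, h0⟩ => ?_
      refine eq_pi_of_swGc_le_neg_sqrt h11 hdet hθ ?_
      rw [(hd1 θ).1 h0, div_le_iff₀ hc]
      linarith
    · refine subsingleton_of_forall_eq 0 fun θ ⟨hθ, h0⟩ => ?_
      refine eq_zero_of_sqrt_le_swGc h11 hdet hθ ?_
      rw [(hd1 θ).1 h0, le_div_iff₀ hc]
      linarith

/-- Roots of the first bicharacteristic speed (Lemma B.2). -/
theorem roots_first_bicharacteristic_speed
    (g h u v g11 g12 g22 : ℝ) (hg : 0 < g) (hh : 0 < h)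
    (h11 : 0 < g11) (hdet : 0 < g11 * g22 - g12 ^ 2) :
    let c := swC g h
    let d1 : ℝ → ℝ := fun θ => u - c * swGc g11 g12 g22 θ
    (|u| < c * Real.sqrt g11 →
      ∃ θ1 ∈ Set.Ioo (0 : ℝ) π, ∃ θ2 ∈ Set.Ioo π (2 * π),
        d1 θ1 = 0 ∧ d1 θ2 = 0 ∧
        ∀ θ ∈ Set.Ico (0 : ℝ) (2 * π), d1 θ = 0 → θ = θ1 ∨ θ = θ2) ∧
    (c * Real.sqrt g11 ≤ |u| →
      {θ ∈ Set.Ico (0 : ℝ) (2 * π) | d1 θ = 0}.Subsingleton) :=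
  roots_first_bicharacteristic_speed_general g h u g11 g12 g22 hg hh h11 hdet
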